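/- arXiv:2205.09955 — 2 statements merged into one kernel-verified Lean document; each statement's English description precedes it below -/
import Mathlib

section
/- Let G be a cactus with n ≥ 6 vertices and r ≥ 2 cycles in which every vertex has degree at least 2. Suppose u₀u₁ is an edge of G with d_G(u₀) = d_G(u₁) = 2, let u₂ be the neighbor of u₀ other than u₁ with d_G(u₂) = d ≥ 3, and suppose u₁u₂ is not an edge of G. Let G' = G − u₀ + u₁u₂. Let D be an orientation of G and let D' be an orientation of G' that orients every edge of G − u₀ in the same direction as D. Then for every real a ≥ 1, R⁰_{a+1}(D) − R⁰_{a+1}(D') ≤ (1/2)·[2^{a+1} − 1 + d^{a+1} − (d−1)^{a+1}]. -/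
/-- An orientation of a simple graph `G`: each edge `{u,v}` is replaced by exactly one
of the arcs `(u,v)` or `(v,u)`. -/
structure SimpleGraph.Orientation {V : Type*} (G : SimpleGraph V) where
  /-- the arc relation of the orientation -/
  arc : V → V → Prop
  adj_of_arc : ∀ u v, arc u v → G.Adj u v
  arc_total : ∀ u v, G.Adj u v → arc u v ∨ arc v u
  arc_asymm : ∀ u v, arc u v → ¬ arc v u

namespace SimpleGraph.Orientation

variable {V : Type*} {G : SimpleGraph V} (D : G.Orientation)

/-- The out-degree of a vertex in the orientation. -/
noncomputable def outDeg (u : V) : ℕ := Set.ncard {v | D.arc u v}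

/-- The in-degree of a vertex in the orientation. -/
noncomputable def inDeg (v : V) : ℕ := Set.ncard {u | D.arc u v}

/-- An orientation is sink-source if every vertex has out-degree 0 or in-degree 0. -/
def IsSinkSource : Prop := ∀ v : V, D.outDeg v = 0 ∨ D.inDeg v = 0

open scoped Classical in
/-- The zeroth-order general Randić index `R⁰_{a+1}(D)` of an orientation:
`(1/2) ∑_{(u,v) arc} ((d⁺ u)^a + (d⁻ v)^a)`. -/
noncomputable def randic [Fintype V] (a : ℝ) : ℝ :=
  (1 / 2) * ∑ p ∈ Finset.univ.filter (fun p : V × V => D.arc p.1 p.2),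
    ((D.outDeg p.1 : ℝ) ^ a + (D.inDeg p.2 : ℝ) ^ a)

end SimpleGraph.Orientation

/-- A cactus: a connected simple graph in which any two distinct cycles share at most
one vertex (cycles are identified with their edge sets). -/
def SimpleGraph.IsCactus {V : Type*} [DecidableEq V] (G : SimpleGraph V) : Prop :=
  G.Connected ∧ ∀ (u v : V) (c : G.Walk u u) (c' : G.Walk v v),
    c.IsCycle → c'.IsCycle → c.edges.toFinset ≠ c'.edges.toFinset →
      (c.support.toFinset ∩ c'.support.toFinset).card ≤ 1

/-!
Write `R⁰_{a+1}(D)` as half the sum over all vertices of `d⁺(v)^{a+1} + d⁻(v)^{a+1}`. Only `u₀`,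
`u₁` and `u₂` have different degrees in `D` and `D'`, and their degrees are determined by the
directions of `u₀u₁`, `u₀u₂` in `D` and of `u₁u₂` in `D'` together with the degrees of `u₁`, `u₂`
through their remaining edges. Checking the sixteen cases, the bound reduces to the convexity of
`x ↦ x^{a+1}`: the increments `(x+1)^{a+1} - x^{a+1}` increase with `x`, so they lie between
`1` and `d^{a+1} - (d-1)^{a+1}` for `0 ≤ x ≤ d - 1`.
-/

theorem Set.ncard_sdiff_singleton_add_ite {α : Type*} (s : Set α) (a : α) [Decidable (a ∈ s)]
    (hs : s.Finite := by toFinite_tac) :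
    (s \ {a}).ncard + (if a ∈ s then 1 else 0) = s.ncard := by
  split_ifs with h
  · exact Set.ncard_sdiff_singleton_add_one h hs
  · rw [Set.sdiff_singleton_eq_self h, add_zero]

theorem Set.ncard_eq_ite_add_ite_of_subset_pair {α : Type*} {s : Set α} {a b : α}
    [Decidable (a ∈ s)] [Decidable (b ∈ s)] (hab : a ≠ b) (hs : s ⊆ {a, b}) :
    s.ncard = (if a ∈ s then 1 else 0) + (if b ∈ s then 1 else 0) := by
  rcases Set.subset_pair_iff_eq.1 hs with rfl | rfl | rfl | rfl <;>
    simp [hab, hab.symm, Set.ncard_pair hab]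

theorem ConvexOn.add_sub_le_add_sub {s : Set ℝ} {f : ℝ → ℝ} (hf : ConvexOn ℝ s f)
    {x y h : ℝ} (hx : x ∈ s) (hy : y + h ∈ s) (hxy : x ≤ y) (hh : 0 < h) :
    f (x + h) - f x ≤ f (y + h) - f y := by
  have hxh : x + h ∈ s := hf.1.ordConnected.out hx hy ⟨by linarith, by linarith⟩
  have hy' : y ∈ s := hf.1.ordConnected.out hx hy ⟨hxy, by linarith⟩
  have h₁ := hf.secant_mono hx hxh hy (by linarith) (by linarith) (by linarith : x + h ≤ y + h)
  have h₂ := hf.secant_mono hy hx hy' (by linarith) (by linarith) hxy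
  rw [← neg_div_neg_eq, ← neg_div_neg_eq (f y - _)] at h₂
  simp only [neg_sub, add_sub_cancel_left] at h₁ h₂
  exact (div_le_div_iff_of_pos_right hh).1 (h₁.trans h₂)

namespace Real

variable {b x y : ℝ}

theorem add_one_rpow_sub_rpow_le (hb : 1 ≤ b) (hx : 0 ≤ x) (hxy : x ≤ y) :
    (x + 1) ^ b - x ^ b ≤ (y + 1) ^ b - y ^ b :=
  (convexOn_rpow hb).add_sub_le_add_sub hx (by simp only [Set.mem_Ici]; linarith) hxy one_pos

theorem one_le_add_one_rpow_sub_rpow (hb : 1 ≤ b) (hx : 0 ≤ x) : 1 ≤ (x + 1) ^ b - x ^ b := by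
  simpa [zero_rpow (by linarith : b ≠ 0)] using add_one_rpow_sub_rpow_le hb le_rfl hx

end Real

/-- The bases are the out- and in-degrees of `u₀`, `u₁`, `u₂` in `D` and `D'`: the 0/1 pairs
`γ, γ'` and `α, α'` record the direction of `u₀u₁` and `u₀u₂` in `D`, `β, β'` that of `u₁u₂` in
`D'`, and `p, q` (resp. `s, t`) count the out- and in-arcs at `u₁` (resp. `u₂`) along the other
edges. -/
theorem three_vertex_rpow_sum_le {b : ℝ} (hb : 1 ≤ b) {d p q s t γ γ' α α' β β' : ℕ} (hd : 2 ≤ d)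
    (hγ : γ + γ' = 1) (hα : α + α' = 1) (hβ : β + β' = 1)
    (hpq : p + γ + (q + γ') = 2) (hst : s + α + (t + α') = d) :
    ((γ' + α' : ℕ) : ℝ) ^ b + ((γ + α : ℕ) : ℝ) ^ b
      + (((p + γ : ℕ) : ℝ) ^ b + ((q + γ' : ℕ) : ℝ) ^ b
        - ((p + β' : ℕ) : ℝ) ^ b - ((q + β : ℕ) : ℝ) ^ b)
      + (((s + α : ℕ) : ℝ) ^ b + ((t + α' : ℕ) : ℝ) ^ b
        - ((s + β : ℕ) : ℝ) ^ b - ((t + β' : ℕ) : ℝ) ^ b)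
      ≤ 2 ^ b - 1 + (d : ℝ) ^ b - ((d : ℝ) - 1) ^ b := by
  obtain rfl : d = s + t + 1 := by omega
  have hs_le : ((s : ℝ) + 1) ^ b - (s : ℝ) ^ b ≤ ((s + t : ℝ) + 1) ^ b - ((s + t : ℝ)) ^ b :=
    Real.add_one_rpow_sub_rpow_le hb (by positivity) (by simp)
  have ht_le : ((t : ℝ) + 1) ^ b - (t : ℝ) ^ b ≤ ((s + t : ℝ) + 1) ^ b - ((s + t : ℝ)) ^ b :=
    Real.add_one_rpow_sub_rpow_le hb (by positivity) (by simp)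
  have h₁_le : ((1 : ℝ) + 1) ^ b - 1 ^ b ≤ ((s + t : ℝ) + 1) ^ b - ((s + t : ℝ)) ^ b :=
    Real.add_one_rpow_sub_rpow_le hb zero_le_one (by norm_cast; omega)
  have hs_ge := Real.one_le_add_one_rpow_sub_rpow hb (Nat.cast_nonneg (α := ℝ) s)
  have ht_ge := Real.one_le_add_one_rpow_sub_rpow hb (Nat.cast_nonneg (α := ℝ) t)
  have htwo : (2 : ℝ) ≤ 2 ^ b := by
    simpa using Real.rpow_le_rpow_of_exponent_le one_le_two hb
  obtain ⟨rfl, rfl⟩ | ⟨rfl, rfl⟩ : γ = 0 ∧ γ' = 1 ∨ γ = 1 ∧ γ' = 0 := (by omega) <;>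
  obtain ⟨rfl, rfl⟩ | ⟨rfl, rfl⟩ : α = 0 ∧ α' = 1 ∨ α = 1 ∧ α' = 0 := (by omega) <;>
  obtain ⟨rfl, rfl⟩ | ⟨rfl, rfl⟩ : β = 0 ∧ β' = 1 ∨ β = 1 ∧ β' = 0 := (by omega) <;>
  obtain ⟨rfl, rfl⟩ | ⟨rfl, rfl⟩ : p = 0 ∧ q = 1 ∨ p = 1 ∧ q = 0 := (by omega) <;>
  · push_cast
    norm_num [Real.zero_rpow (by linarith : b ≠ 0)] at h₁_le ⊢
    linarith

namespace SimpleGraph.Orientation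

variable {V : Type*} {G G' : SimpleGraph V}

def reverse (D : G.Orientation) : G.Orientation where
  arc u v := D.arc v u
  adj_of_arc u v h := (D.adj_of_arc v u h).symm
  arc_total u v h := D.arc_total v u h.symm
  arc_asymm u v h := D.arc_asymm v u h

variable (D : G.Orientation)

@[simp] theorem reverse_arc (u v : V) : D.reverse.arc u v ↔ D.arc v u := Iff.rfl

@[simp] theorem outDeg_reverse (v : V) : D.reverse.outDeg v = D.inDeg v := rfl

theorem outDeg_add_inDeg [Finite V] (v : V) :
    D.outDeg v + D.inDeg v = (G.neighborSet v).ncard := by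
  have hdisj : Disjoint {x | D.arc v x} {x | D.arc x v} :=
    Set.disjoint_left.2 fun x h₁ h₂ => D.arc_asymm v x h₁ h₂
  have hunion : {x | D.arc v x} ∪ {x | D.arc x v} = G.neighborSet v := by
    ext x
    exact ⟨fun h => h.elim (D.adj_of_arc v x) fun h => (D.adj_of_arc x v h).symm,
      D.arc_total v x⟩
  rw [outDeg, inDeg, ← Set.ncard_union_eq hdisj, hunion]

open Classical in
theorem ite_arc_add_ite_arc {x y : V} (h : G.Adj x y) :
    (if D.arc x y then 1 else 0) + (if D.arc y x then 1 else 0) = 1 := by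
  rcases D.arc_total x y h with hxy | hyx
  · rw [if_pos hxy, if_neg (D.arc_asymm x y hxy)]
  · rw [if_neg (D.arc_asymm y x hyx), if_pos hyx]

theorem outDeg_eq_zero {v : V} (hv : ∀ x, ¬G.Adj v x) : D.outDeg v = 0 := by
  simp [outDeg, fun x => mt (D.adj_of_arc v x) (hv x)]

theorem inDeg_eq_zero {v : V} (hv : ∀ x, ¬G.Adj v x) : D.inDeg v = 0 :=
  D.reverse.outDeg_eq_zero hv

open Classical in
theorem outDeg_eq_ite_add_ite [Finite V] {v w₁ w₂ : V} (hw : w₁ ≠ w₂)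
    (hv : G.neighborSet v = {w₁, w₂}) :
    D.outDeg v = (if D.arc v w₁ then 1 else 0) + (if D.arc v w₂ then 1 else 0) :=
  Set.ncard_eq_ite_add_ite_of_subset_pair hw fun x hx => hv ▸ D.adj_of_arc v x hx

open Classical in
theorem inDeg_eq_ite_add_ite [Finite V] {v w₁ w₂ : V} (hw : w₁ ≠ w₂)
    (hv : G.neighborSet v = {w₁, w₂}) :
    D.inDeg v = (if D.arc w₁ v then 1 else 0) + (if D.arc w₂ v then 1 else 0) :=
  D.reverse.outDeg_eq_ite_add_ite hw hv

open Classical in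
theorem outDeg_eq_ncard_sdiff_add_ite [Finite V] (v w : V) :
    D.outDeg v = ({x | D.arc v x} \ {w}).ncard + (if D.arc v w then 1 else 0) :=
  (Set.ncard_sdiff_singleton_add_ite {x | D.arc v x} w).symm

theorem arc_iff_arc_of_adj (D' : G'.Orientation) {x y : V} (hadj : G'.Adj x y → G.Adj x y)
    (hxy : D.arc x y → D'.arc x y) (hyx : D.arc y x → D'.arc y x) :
    D.arc x y ↔ D'.arc x y :=
  ⟨hxy, fun h => (D.arc_total x y (hadj (D'.adj_of_arc x y h))).resolve_right
    fun h' => D'.arc_asymm x y h (hyx h')⟩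

theorem randic_eq_half_sum_rpow [Fintype V] {a : ℝ} (ha : a + 1 ≠ 0) :
    D.randic a = 1 / 2 * ∑ v, ((D.outDeg v : ℝ) ^ (a + 1) + (D.inDeg v : ℝ) ^ (a + 1)) := by
  classical
  have hout (u : V) : (Finset.univ.filter (D.arc u ·)).card = D.outDeg u := by
    simp [outDeg, ← Set.ncard_coe_finset]
  have hin (v : V) : (Finset.univ.filter (D.arc · v)).card = D.inDeg v := by
    simp [inDeg, ← Set.ncard_coe_finset]
  have hpow (n : ℕ) : (n : ℝ) ^ (a + 1) = n * (n : ℝ) ^ a := by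
    rw [Real.rpow_add_one' n.cast_nonneg ha, mul_comm]
  rw [randic, Finset.sum_add_distrib, Finset.sum_add_distrib]
  congr 2 <;> rw [Finset.sum_filter, Fintype.sum_prod_type]
  · simp only [← Finset.sum_filter, Finset.sum_const, nsmul_eq_mul, hout, hpow]
  · rw [Finset.sum_comm]
    simp only [← Finset.sum_filter, Finset.sum_const, nsmul_eq_mul, hin, hpow]

theorem randic_sub_randic_eq_sum [Fintype V] (D' : G'.Orientation) {a : ℝ}
    (ha : a + 1 ≠ 0) (s : Finset V)
    (hs : ∀ v ∉ s, D'.outDeg v = D.outDeg v ∧ D'.inDeg v = D.inDeg v) :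
    D.randic a - D'.randic a = 1 / 2 * ∑ v ∈ s, ((D.outDeg v : ℝ) ^ (a + 1) +
      (D.inDeg v : ℝ) ^ (a + 1) - (D'.outDeg v : ℝ) ^ (a + 1) - (D'.inDeg v : ℝ) ^ (a + 1)) := by
  rw [D.randic_eq_half_sum_rpow ha, D'.randic_eq_half_sum_rpow ha, ← mul_sub,
    ← Finset.sum_sub_distrib, ← Finset.sum_subset (Finset.subset_univ s)]
  · simp only [sub_sub]
  · intro v _ hv
    simp [hs v hv]

end SimpleGraph.Orientation

namespace SimpleGraph

variable {V : Type*}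

/-- `G'` is `G − u₀ + u₁u₂`; when `G.neighborSet u₀ = {u₁, u₂}` this is the smoothing of `u₀`. -/
def IsVertexSmoothing (G G' : SimpleGraph V) (u₀ u₁ u₂ : V) : Prop :=
  ∀ x y, G'.Adj x y ↔
    ((G.Adj x y ∧ x ≠ u₀ ∧ y ≠ u₀) ∨ (x = u₁ ∧ y = u₂) ∨ (x = u₂ ∧ y = u₁))

namespace IsVertexSmoothing

variable {G G' : SimpleGraph V} {u₀ u₁ u₂ : V}

theorem swap (h : G.IsVertexSmoothing G' u₀ u₁ u₂) : G.IsVertexSmoothing G' u₀ u₂ u₁ :=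
  fun x y => (h x y).trans (by tauto)

theorem adj (h : G.IsVertexSmoothing G' u₀ u₁ u₂) : G'.Adj u₁ u₂ :=
  (h u₁ u₂).2 (Or.inr (Or.inl ⟨rfl, rfl⟩))

theorem not_adj_left (h : G.IsVertexSmoothing G' u₀ u₁ u₂) (h₁ : u₀ ≠ u₁) (h₂ : u₀ ≠ u₂)
    (x : V) : ¬G'.Adj u₀ x := by
  rw [h]
  tauto

variable {D : G.Orientation} {D' : G'.Orientation}

theorem arc_iff (h : G.IsVertexSmoothing G' u₀ u₁ u₂)
    (hDD' : ∀ x y, x ≠ u₀ → y ≠ u₀ → D.arc x y → D'.arc x y) {x y : V}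
    (hx : x ≠ u₀) (hy : y ≠ u₀) (hxy : ¬(x = u₁ ∧ y = u₂)) (hyx : ¬(x = u₂ ∧ y = u₁)) :
    D.arc x y ↔ D'.arc x y :=
  D.arc_iff_arc_of_adj D' (fun hadj => by rw [h] at hadj; tauto)
    (hDD' x y hx hy) (hDD' y x hy hx)

theorem outDeg_eq_of_ne (h : G.IsVertexSmoothing G' u₀ u₁ u₂)
    (hDD' : ∀ x y, x ≠ u₀ → y ≠ u₀ → D.arc x y → D'.arc x y)
    (hN : G.neighborSet u₀ = {u₁, u₂}) {v : V} (hv₀ : v ≠ u₀) (hv₁ : v ≠ u₁) (hv₂ : v ≠ u₂) :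
    D'.outDeg v = D.outDeg v := by
  refine congrArg Set.ncard (Set.ext fun x => ?_)
  by_cases hx : x = u₀
  · have hG : ¬G.Adj v u₀ := fun hadj => by
      have hv : v ∈ G.neighborSet u₀ := hadj.symm
      rw [hN] at hv
      exact hv.elim hv₁ hv₂
    have hG' : ¬G'.Adj v u₀ := by rw [h]; tauto
    rw [hx]
    exact iff_of_false (mt (D'.adj_of_arc v u₀) hG') (mt (D.adj_of_arc v u₀) hG)
  · exact (h.arc_iff hDD' hv₀ hx (by tauto) (by tauto)).symm

theorem degrees_eq_of_notMem [DecidableEq V] (h : G.IsVertexSmoothing G' u₀ u₁ u₂)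
    (hDD' : ∀ x y, x ≠ u₀ → y ≠ u₀ → D.arc x y → D'.arc x y)
    (hN : G.neighborSet u₀ = {u₁, u₂}) {v : V} (hv : v ∉ ({u₀, u₁, u₂} : Finset V)) :
    D'.outDeg v = D.outDeg v ∧ D'.inDeg v = D.inDeg v := by
  simp only [Finset.mem_insert, Finset.mem_singleton, not_or] at hv
  exact ⟨h.outDeg_eq_of_ne hDD' hN hv.1 hv.2.1 hv.2.2,
    h.outDeg_eq_of_ne (D := D.reverse) (D' := D'.reverse) (fun x y hx hy => hDD' y x hy hx) hN
      hv.1 hv.2.1 hv.2.2⟩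

open Classical in
theorem exists_outDeg_eq [Finite V] (h : G.IsVertexSmoothing G' u₀ u₁ u₂)
    (hDD' : ∀ x y, x ≠ u₀ → y ≠ u₀ → D.arc x y → D'.arc x y)
    (h₀₁ : u₀ ≠ u₁) (h₀₂ : u₀ ≠ u₂) (h₁₂ : ¬G.Adj u₁ u₂) :
    ∃ k, D.outDeg u₁ = k + (if D.arc u₁ u₀ then 1 else 0) ∧
      D'.outDeg u₁ = k + (if D'.arc u₁ u₂ then 1 else 0) := by
  refine ⟨_, D.outDeg_eq_ncard_sdiff_add_ite u₁ u₀, ?_⟩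
  rw [D'.outDeg_eq_ncard_sdiff_add_ite u₁ u₂]
  congr 2
  ext x
  simp only [Set.mem_sdiff, Set.mem_ofPred_eq, Set.mem_singleton_iff]
  by_cases hx₀ : x = u₀
  · rw [hx₀]
    exact iff_of_false (fun hx => h.not_adj_left h₀₁ h₀₂ u₁ (D'.adj_of_arc _ _ hx.1).symm)
      fun hx => hx.2 rfl
  by_cases hx₂ : x = u₂
  · rw [hx₂]
    exact iff_of_false (fun hx => hx.2 rfl) fun hx => h₁₂ (D.adj_of_arc _ _ hx.1)
  have h₁₂' : u₁ ≠ u₂ := G'.ne_of_adj h.adj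
  simp only [hx₀, hx₂, not_false_eq_true, and_true]
  exact (h.arc_iff hDD' h₀₁.symm hx₀ (by tauto) (by tauto)).symm

open Classical in
theorem exists_degrees_eq [Finite V] (h : G.IsVertexSmoothing G' u₀ u₁ u₂)
    (hDD' : ∀ x y, x ≠ u₀ → y ≠ u₀ → D.arc x y → D'.arc x y)
    (h₀₁ : u₀ ≠ u₁) (h₀₂ : u₀ ≠ u₂) (h₁₂ : ¬G.Adj u₁ u₂) :
    ∃ k l, D.outDeg u₁ = k + (if D.arc u₁ u₀ then 1 else 0) ∧
      D.inDeg u₁ = l + (if D.arc u₀ u₁ then 1 else 0) ∧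
      D'.outDeg u₁ = k + (if D'.arc u₁ u₂ then 1 else 0) ∧
      D'.inDeg u₁ = l + (if D'.arc u₂ u₁ then 1 else 0) := by
  obtain ⟨k, hk, hk'⟩ := h.exists_outDeg_eq hDD' h₀₁ h₀₂ h₁₂
  obtain ⟨l, hl, hl'⟩ := h.exists_outDeg_eq (D := D.reverse) (D' := D'.reverse)
    (fun x y hx hy => hDD' y x hy hx) h₀₁ h₀₂ h₁₂
  exact ⟨k, l, hk, hl, hk', hl'⟩

end IsVertexSmoothing

end SimpleGraph

theorem randic_sub_le_of_delete_shift_general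
    {V : Type*} [Fintype V] (G G' : SimpleGraph V) (d : ℕ)
    (u₀ u₁ u₂ : V)
    (hd1 : (G.neighborSet u₁).ncard = 2)
    (hN : G.neighborSet u₀ = {u₁, u₂})
    (hd2 : (G.neighborSet u₂).ncard = d) (hd3 : 3 ≤ d)
    (h12 : ¬ G.Adj u₁ u₂)
    (hG' : ∀ x y, G'.Adj x y ↔
      ((G.Adj x y ∧ x ≠ u₀ ∧ y ≠ u₀) ∨ (x = u₁ ∧ y = u₂) ∨ (x = u₂ ∧ y = u₁)))
    (D : G.Orientation) (D' : G'.Orientation)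
    (hDD' : ∀ x y, x ≠ u₀ → y ≠ u₀ → D.arc x y → D'.arc x y)
    (a : ℝ) (ha : 1 ≤ a) :
    D.randic a - D'.randic a ≤
      (1 / 2) * ((2 : ℝ) ^ (a + 1) - 1 + (d : ℝ) ^ (a + 1) - ((d : ℝ) - 1) ^ (a + 1)) := by
  classical
  have hS : G.IsVertexSmoothing G' u₀ u₁ u₂ := hG'
  have hadj₁ : G.Adj u₀ u₁ := show u₁ ∈ G.neighborSet u₀ by simp [hN]
  have hadj₂ : G.Adj u₀ u₂ := show u₂ ∈ G.neighborSet u₀ by simp [hN]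
  have h₁₂ : u₁ ≠ u₂ := G'.ne_of_adj hS.adj
  have hu₀ := hS.not_adj_left hadj₁.ne hadj₂.ne
  obtain ⟨p, q, hp, hq, hp', hq'⟩ := hS.exists_degrees_eq hDD' hadj₁.ne hadj₂.ne h12
  obtain ⟨s, t, hs, ht, hs', ht'⟩ :=
    hS.swap.exists_degrees_eq hDD' hadj₂.ne hadj₁.ne fun h => h12 h.symm
  rw [D.randic_sub_randic_eq_sum D' (by linarith) _ fun _ => hS.degrees_eq_of_notMem hDD' hN,
    Finset.sum_insert (by simp [hadj₁.ne, hadj₂.ne]), Finset.sum_insert (by simpa using h₁₂),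
    Finset.sum_singleton, D.outDeg_eq_ite_add_ite h₁₂ hN, D.inDeg_eq_ite_add_ite h₁₂ hN,
    D'.outDeg_eq_zero hu₀, D'.inDeg_eq_zero hu₀, hp, hq, hp', hq', hs, ht, hs', ht',
    Nat.cast_zero, Real.zero_rpow (by linarith)]
  have key := three_vertex_rpow_sum_le (b := a + 1) (by linarith) (by omega : 2 ≤ d)
    (D.ite_arc_add_ite_arc hadj₁.symm) (D.ite_arc_add_ite_arc hadj₂.symm)
    (D'.ite_arc_add_ite_arc hS.adj.symm)
    (by rw [← hp, ← hq, D.outDeg_add_inDeg, hd1]) (by rw [← hs, ← ht, D.outDeg_add_inDeg, hd2])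
  linarith

theorem randic_sub_le_of_delete_shift
    {V : Type*} [Fintype V] [DecidableEq V] (G G' : SimpleGraph V) (n r d : ℕ)
    (hn : Fintype.card V = n) (hn6 : 6 ≤ n) (hr : 2 ≤ r)
    (hcac : G.IsCactus) (hcyc : G.edgeSet.ncard + 1 = n + r)
    (hδ : ∀ v : V, 2 ≤ (G.neighborSet v).ncard)
    (u₀ u₁ u₂ : V) (h01 : G.Adj u₀ u₁)
    (hd0 : (G.neighborSet u₀).ncard = 2) (hd1 : (G.neighborSet u₁).ncard = 2)
    (hN : G.neighborSet u₀ = {u₁, u₂})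
    (hd2 : (G.neighborSet u₂).ncard = d) (hd3 : 3 ≤ d)
    (h12 : ¬ G.Adj u₁ u₂)
    (hG' : ∀ x y, G'.Adj x y ↔
      ((G.Adj x y ∧ x ≠ u₀ ∧ y ≠ u₀) ∨ (x = u₁ ∧ y = u₂) ∨ (x = u₂ ∧ y = u₁)))
    (D : G.Orientation) (D' : G'.Orientation)
    (hDD' : ∀ x y, x ≠ u₀ → y ≠ u₀ → D.arc x y → D'.arc x y)
    (a : ℝ) (ha : 1 ≤ a) :
    D.randic a - D'.randic a ≤
      (1 / 2) * ((2 : ℝ) ^ (a + 1) - 1 + (d : ℝ) ^ (a + 1) - ((d : ℝ) - 1) ^ (a + 1)) :=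
  randic_sub_le_of_delete_shift_general G G' d u₀ u₁ u₂ hd1 hN hd2 hd3 h12 hG' D D' hDD' a ha
end

section
/- Let G be a tree with n ≥ 2 vertices, let D be an orientation of G, and let a ≥ 1 be a real number. Then R⁰_{a+1}(D) ≤ (1/2)·[n − 1 + (n−1)^{1+a}], with equality if and only if D is one of the two sink-source orientations of the star K_{1,n−1} (all arcs out of the center, or all arcs into the center). -/
/-!
Put `p = 1 + a`. A vertex `u` is the tail of `d⁺(u)` arcs and the head of `d⁻(u)` arcs, so
`2 R⁰_{a+1}(D) = ∑ᵤ (d⁺(u)ᵖ + d⁻(u)ᵖ)`. As `xᵖ + yᵖ ≤ (x + y)ᵖ`, with equality iff `x = 0` or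
`y = 0`, this is at most `∑ᵤ deg(u)ᵖ`, with equality iff `D` is sink-source. In a tree the
degrees are at least `1` and their excesses `deg(u) - 1` add up to `n - 2`; convexity of `t ↦ tᵖ`
lets one move all the excess onto a single vertex without decreasing `∑ᵤ deg(u)ᵖ`, so
`∑ᵤ deg(u)ᵖ ≤ (n - 1) + (n - 1)ᵖ`, the value for the star. Strict convexity makes this strict as
soon as two vertices have degree at least `2`.
-/

open Finset

section Convex

variable {f : ℝ → ℝ} {m s t : ℝ}

theorem ConvexOn.add_le_map_add_sub (hf : ConvexOn ℝ (Set.Ici m) f) (hs : m ≤ s) (ht : m ≤ t) :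
    f s + f t ≤ f m + f (s + t - m) := by
  rcases hs.eq_or_lt with rfl | hs
  · simp
  rcases ht.eq_or_lt with rfl | ht
  · simp [add_comm]
  have hz : s + t - m ∈ Set.Ici m := by simp only [Set.mem_Ici]; linarith
  have h₁ := hf.secant_mono_aux1 Set.self_mem_Ici hz hs (by linarith)
  have h₂ := hf.secant_mono_aux1 Set.self_mem_Ici hz ht (by linarith)
  nlinarith

theorem StrictConvexOn.add_lt_map_add_sub (hf : StrictConvexOn ℝ (Set.Ici m) f) (hs : m < s)
    (ht : m < t) : f s + f t < f m + f (s + t - m) := by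
  have hz : s + t - m ∈ Set.Ici m := by simp only [Set.mem_Ici]; linarith
  have h₁ := hf.secant_strict_mono_aux1 Set.self_mem_Ici hz hs (by linarith)
  have h₂ := hf.secant_strict_mono_aux1 Set.self_mem_Ici hz ht (by linarith)
  nlinarith

variable {ι : Type*} {I : Finset ι} {x : ι → ℝ}

theorem ConvexOn.sum_map_sub_le (hf : ConvexOn ℝ (Set.Ici m) f) (hx : ∀ i ∈ I, m ≤ x i) :
    ∑ i ∈ I, (f (x i) - f m) ≤ f (m + ∑ i ∈ I, (x i - m)) - f m := by
  classical
  induction I using Finset.induction_on with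
  | empty => simp
  | insert i I hi ih =>
    rw [sum_insert hi, sum_insert hi]
    have hrest : 0 ≤ ∑ j ∈ I, (x j - m) :=
      sum_nonneg fun j hj ↦ sub_nonneg.2 (hx j (mem_insert_of_mem hj))
    have := hf.add_le_map_add_sub (hx i (mem_insert_self i I)) (le_add_of_nonneg_right hrest)
    have := ih fun j hj ↦ hx j (mem_insert_of_mem hj)
    ring_nf at *
    linarith

theorem StrictConvexOn.sum_map_sub_lt (hf : StrictConvexOn ℝ (Set.Ici m) f)
    (hx : ∀ k ∈ I, m ≤ x k) {i j : ι} (hi : i ∈ I) (hj : j ∈ I) (hij : i ≠ j) (hmi : m < x i)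
    (hmj : m < x j) :
    ∑ k ∈ I, (f (x k) - f m) < f (m + ∑ k ∈ I, (x k - m)) - f m := by
  classical
  rw [← add_sum_erase I _ hi, ← add_sum_erase I _ hi]
  have hrest : x j - m ≤ ∑ k ∈ I.erase i, (x k - m) :=
    single_le_sum (fun k hk ↦ sub_nonneg.2 (hx k (mem_of_mem_erase hk)))
      (mem_erase.2 ⟨hij.symm, hj⟩)
  have h₁ := hf.convexOn.sum_map_sub_le (I := I.erase i) fun k hk ↦ hx k (mem_of_mem_erase hk)
  have h₂ := hf.add_lt_map_add_sub hmi (by linarith : m < m + ∑ k ∈ I.erase i, (x k - m))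
  ring_nf at *
  linarith

end Convex

theorem Real.add_rpow_eq_rpow_add_iff {p x y : ℝ} (hx : 0 ≤ x) (hy : 0 ≤ y) (hp : 1 < p) :
    x ^ p + y ^ p = (x + y) ^ p ↔ x = 0 ∨ y = 0 := by
  have hp₀ : p ≠ 0 := by positivity
  refine ⟨fun h ↦ ?_, by rintro (rfl | rfl) <;> simp [Real.zero_rpow hp₀]⟩
  by_contra! hxy
  have := (strictConvexOn_rpow hp).add_lt_map_add_sub (hx.lt_of_ne' hxy.1) (hy.lt_of_ne' hxy.2)
  simp only [Real.zero_rpow hp₀, sub_zero, zero_add] at this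
  exact this.ne h

namespace SimpleGraph.Orientation

variable {V : Type*} {G : SimpleGraph V} (D : G.Orientation)

section Finite

variable [Finite V]

theorem outDeg_eq_zero_iff {u : V} : D.outDeg u = 0 ↔ ∀ v, ¬ D.arc u v := by
  rw [outDeg, Set.ncard_eq_zero]
  exact Set.eq_empty_iff_forall_notMem

theorem inDeg_eq_zero_iff {v : V} : D.inDeg v = 0 ↔ ∀ u, ¬ D.arc u v := by
  rw [inDeg, Set.ncard_eq_zero]
  exact Set.eq_empty_iff_forall_notMem

end Finite

variable [Fintype V]

-- Classical decidability, so that the filtered arc set is syntactically the one in `randic`.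
open scoped Classical in
theorem sum_arcs_fst (g : V → ℝ) :
    ∑ p ∈ univ.filter (fun p : V × V => D.arc p.1 p.2), g p.1 = ∑ u, D.outDeg u * g u := by
  rw [sum_filter, ← univ_product_univ, sum_product]
  refine sum_congr rfl fun u _ ↦ ?_
  dsimp only
  rw [← sum_filter, sum_const, nsmul_eq_mul, outDeg, Set.ncard_eq_toFinset_card',
    Set.toFinset_ofPred]

open scoped Classical in
theorem sum_arcs_snd (g : V → ℝ) :
    ∑ p ∈ univ.filter (fun p : V × V => D.arc p.1 p.2), g p.2 = ∑ v, D.inDeg v * g v := by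
  rw [sum_filter, ← univ_product_univ, sum_product_right]
  refine sum_congr rfl fun v _ ↦ ?_
  dsimp only
  rw [← sum_filter, sum_const, nsmul_eq_mul, inDeg, Set.ncard_eq_toFinset_card',
    Set.toFinset_ofPred]

theorem randic_eq_sum_rpow {a : ℝ} (ha : 1 + a ≠ 0) :
    D.randic a = 1 / 2 * ∑ u, ((D.outDeg u : ℝ) ^ (1 + a) + (D.inDeg u : ℝ) ^ (1 + a)) := by
  rw [randic, sum_add_distrib, D.sum_arcs_fst fun u ↦ (D.outDeg u : ℝ) ^ a,
    D.sum_arcs_snd fun v ↦ (D.inDeg v : ℝ) ^ a, ← sum_add_distrib]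
  simp only [Real.rpow_one_add' (Nat.cast_nonneg _) ha]

variable [DecidableRel G.Adj] {p : ℝ}

theorem degree_eq_outDeg_add_inDeg (u : V) :
    G.degree u = D.outDeg u + D.inDeg u := by
  have hsplit : G.neighborSet u = {v | D.arc u v} ∪ {v | D.arc v u} := by
    ext v
    exact ⟨D.arc_total u v, fun h ↦ h.elim (D.adj_of_arc u v) fun h ↦ (D.adj_of_arc v u h).symm⟩
  have hdisj : Disjoint {v | D.arc u v} {v | D.arc v u} :=
    Set.disjoint_left.2 fun v ↦ D.arc_asymm u v
  rw [← card_neighborSet_eq_degree, ← Nat.card_eq_fintype_card, Nat.card_coe_set_eq, hsplit,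
    Set.ncard_union_eq hdisj]
  rfl

theorem rpow_outDeg_add_rpow_inDeg_le (hp : 1 ≤ p) (u : V) :
    (D.outDeg u : ℝ) ^ p + (D.inDeg u : ℝ) ^ p ≤ (G.degree u : ℝ) ^ p := by
  rw [D.degree_eq_outDeg_add_inDeg, Nat.cast_add]
  exact Real.add_rpow_le_rpow_add (Nat.cast_nonneg _) (Nat.cast_nonneg _) hp

theorem sum_rpow_le_sum_degree_rpow (hp : 1 ≤ p) :
    ∑ u, ((D.outDeg u : ℝ) ^ p + (D.inDeg u : ℝ) ^ p) ≤ ∑ u, (G.degree u : ℝ) ^ p :=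
  sum_le_sum fun u _ ↦ D.rpow_outDeg_add_rpow_inDeg_le hp u

theorem sum_rpow_eq_sum_degree_rpow_iff (hp : 1 < p) :
    ∑ u, ((D.outDeg u : ℝ) ^ p + (D.inDeg u : ℝ) ^ p) = ∑ u, (G.degree u : ℝ) ^ p ↔
      D.IsSinkSource := by
  rw [sum_eq_sum_iff_of_le fun u _ ↦ D.rpow_outDeg_add_rpow_inDeg_le hp.le u]
  simp only [mem_univ, true_imp_iff, D.degree_eq_outDeg_add_inDeg, Nat.cast_add,
    Real.add_rpow_eq_rpow_add_iff (Nat.cast_nonneg _) (Nat.cast_nonneg _) hp, Nat.cast_eq_zero]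
  rfl

end SimpleGraph.Orientation

namespace SimpleGraph

variable {V : Type*} {G : SimpleGraph V} {c : V}

def IsStar (G : SimpleGraph V) (c : V) : Prop :=
  ∀ x y, G.Adj x y ↔ (x = c ∧ y ≠ c) ∨ (y = c ∧ x ≠ c)

theorem IsStar.adj_center (hc : G.IsStar c) {v : V} (hv : v ≠ c) : G.Adj c v :=
  (hc c v).2 (Or.inl ⟨rfl, hv⟩)

theorem IsStar.eq_center_of_adj (hc : G.IsStar c) {v w : V} (hv : v ≠ c) (h : G.Adj v w) :
    w = c := by
  rcases (hc v w).1 h with ⟨rfl, -⟩ | ⟨rfl, -⟩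
  · exact absurd rfl hv
  · rfl

theorem IsStar.isSinkSource_iff [Finite V] (hc : G.IsStar c) (D : G.Orientation) :
    D.IsSinkSource ↔ (∀ v, v ≠ c → D.arc c v) ∨ (∀ v, v ≠ c → D.arc v c) := by
  constructor
  · intro hss
    refine (hss c).symm.imp (fun hin v hv ↦ ?_) (fun hout v hv ↦ ?_)
    · exact (D.arc_total c v (hc.adj_center hv)).resolve_right (D.inDeg_eq_zero_iff.1 hin v)
    · exact (D.arc_total c v (hc.adj_center hv)).resolve_left (D.outDeg_eq_zero_iff.1 hout v)
  · rintro (hout | hin) u <;> by_cases hu : u = c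
    · subst hu
      exact Or.inr <| D.inDeg_eq_zero_iff.2 fun w hw ↦
        D.arc_asymm _ _ hw (hout w (G.ne_of_adj (D.adj_of_arc w u hw)))
    · refine Or.inl <| D.outDeg_eq_zero_iff.2 fun w hw ↦ ?_
      obtain rfl := hc.eq_center_of_adj hu (D.adj_of_arc u w hw)
      exact D.arc_asymm _ _ hw (hout u hu)
    · subst hu
      exact Or.inl <| D.outDeg_eq_zero_iff.2 fun w hw ↦
        D.arc_asymm _ _ hw (hin w (G.ne_of_adj (D.adj_of_arc u w hw)).symm)
    · refine Or.inr <| D.inDeg_eq_zero_iff.2 fun w hw ↦ ?_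
      obtain rfl := hc.eq_center_of_adj hu (D.adj_of_arc w u hw).symm
      exact D.arc_asymm _ _ hw (hin u hu)

variable [Fintype V] [DecidableRel G.Adj]

theorem isStar_of_adj_of_degree_eq_one (hadj : ∀ v ≠ c, G.Adj c v)
    (hdeg : ∀ v ≠ c, G.degree v = 1) : G.IsStar c := by
  have hleaf {v w : V} (hv : v ≠ c) (h : G.Adj v w) : w = c := by
    obtain ⟨u, -, hu⟩ := degree_eq_one_iff_existsUnique_adj.1 (hdeg v hv)
    exact (hu w h).trans (hu c (hadj v hv).symm).symm
  refine fun x y ↦ ⟨fun hxy ↦ ?_, ?_⟩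
  · by_cases hx : x = c
    · exact Or.inl ⟨hx, hx ▸ (G.ne_of_adj hxy).symm⟩
    · exact Or.inr ⟨hleaf hx hxy, hx⟩
  · rintro (⟨rfl, hy⟩ | ⟨rfl, hx⟩)
    · exact hadj y hy
    · exact (hadj x hx).symm

theorem IsStar.degree_center (hc : G.IsStar c) : G.degree c = Fintype.card V - 1 := by
  classical
  have : G.neighborFinset c = univ.erase c := by
    ext v
    simp only [mem_neighborFinset, mem_erase, mem_univ, and_true]
    exact ⟨fun h ↦ (G.ne_of_adj h).symm, hc.adj_center⟩
  rw [← card_neighborFinset_eq_degree, this, card_erase_of_mem (mem_univ c), card_univ]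

theorem IsStar.degree_of_ne (hc : G.IsStar c) {v : V} (hv : v ≠ c) : G.degree v = 1 :=
  degree_eq_one_iff_existsUnique_adj.2
    ⟨c, (hc.adj_center hv).symm, fun _ ↦ hc.eq_center_of_adj hv⟩

theorem IsStar.sum_degree_rpow (hc : G.IsStar c) (p : ℝ) :
    ∑ v, (G.degree v : ℝ) ^ p = ((Fintype.card V : ℝ) - 1) + ((Fintype.card V : ℝ) - 1) ^ p := by
  classical
  have hn : 1 ≤ Fintype.card V := Fintype.card_pos_iff.2 ⟨c⟩
  rw [← add_sum_erase _ _ (mem_univ c), sum_congr rfl fun v hv ↦ by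
    rw [hc.degree_of_ne (ne_of_mem_erase hv), Nat.cast_one, Real.one_rpow],
    hc.degree_center, sum_const, card_erase_of_mem (mem_univ c), card_univ, nsmul_eq_mul,
    mul_one, Nat.cast_sub hn, Nat.cast_one, add_comm]

theorem Preconnected.one_le_degree [Nontrivial V] (h : G.Preconnected) (v : V) :
    (1 : ℝ) ≤ G.degree v := by
  exact_mod_cast h.degree_pos_of_nontrivial v

theorem IsTree.sum_degree_add_two (h : G.IsTree) : ∑ v, G.degree v + 2 = 2 * Fintype.card V := by
  rw [sum_degrees_eq_twice_card_edges, ← h.card_edgeFinset]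
  ring

theorem IsTree.adj_of_degree_eq_one (h : G.IsTree) (hdeg : ∀ v ≠ c, G.degree v = 1) {v : V}
    (hv : v ≠ c) : G.Adj c v := by
  classical
  have hsum := h.sum_degree_add_two
  rw [← add_sum_erase _ _ (mem_univ c), sum_congr rfl fun v hv ↦ hdeg v (ne_of_mem_erase hv),
    sum_const, card_erase_of_mem (mem_univ c), card_univ, smul_eq_mul, mul_one] at hsum
  have hnbr : G.neighborFinset c = univ.erase c := by
    refine eq_of_subset_of_card_le (fun w hw ↦ ?_) ?_
    · exact mem_erase.2 ⟨(G.ne_of_adj ((mem_neighborFinset _ _ _).1 hw)).symm, mem_univ w⟩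
    · rw [card_neighborFinset_eq_degree, card_erase_of_mem (mem_univ c), card_univ]
      omega
  rw [← mem_neighborFinset, hnbr]
  exact mem_erase.2 ⟨hv, mem_univ v⟩

end SimpleGraph

namespace SimpleGraph.IsTree

variable {V : Type*} {G : SimpleGraph V} [Fintype V] [DecidableRel G.Adj] {p : ℝ}

theorem one_add_sum_degree_sub_one (h : G.IsTree) :
    1 + ∑ v, ((G.degree v : ℝ) - 1) = Fintype.card V - 1 := by
  have hsum : (∑ v, G.degree v : ℝ) + 2 = 2 * Fintype.card V := by
    exact_mod_cast h.sum_degree_add_two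
  rw [sum_sub_distrib, sum_const, card_univ, nsmul_one]
  linarith

theorem sum_degree_rpow_le [Nontrivial V] (h : G.IsTree) (hp : 1 ≤ p) :
    ∑ v, (G.degree v : ℝ) ^ p ≤ ((Fintype.card V : ℝ) - 1) + ((Fintype.card V : ℝ) - 1) ^ p := by
  have hdeg (v : V) (_ : v ∈ univ) := h.preconnected.one_le_degree v
  have := ((convexOn_rpow hp).subset (Set.Ici_subset_Ici.2 zero_le_one)
    (convex_Ici 1)).sum_map_sub_le hdeg
  rw [h.one_add_sum_degree_sub_one, Real.one_rpow, sum_sub_distrib, sum_const, card_univ,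
    nsmul_one] at this
  linarith

theorem exists_isStar_of_sum_degree_rpow_eq [Nontrivial V] (h : G.IsTree) (hp : 1 < p)
    (heq : ∑ v, (G.degree v : ℝ) ^ p =
      ((Fintype.card V : ℝ) - 1) + ((Fintype.card V : ℝ) - 1) ^ p) :
    ∃ c, G.IsStar c := by
  have hdeg (v : V) (_ : v ∈ univ) := h.preconnected.one_le_degree v
  have hleaf {u v : V} (huv : u ≠ v) : G.degree u = 1 ∨ G.degree v = 1 := by
    by_contra! hne
    have hu := (hdeg u (mem_univ u)).lt_of_ne (by exact_mod_cast hne.1.symm)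
    have hv := (hdeg v (mem_univ v)).lt_of_ne (by exact_mod_cast hne.2.symm)
    have := ((strictConvexOn_rpow hp).subset (Set.Ici_subset_Ici.2 zero_le_one)
      (convex_Ici 1)).sum_map_sub_lt hdeg (mem_univ u) (mem_univ v) huv hu hv
    rw [h.one_add_sum_degree_sub_one, Real.one_rpow, sum_sub_distrib, sum_const, card_univ,
      nsmul_one] at this
    linarith
  obtain ⟨c, hc⟩ : ∃ c, ∀ v ≠ c, G.degree v = 1 := by
    by_contra! hcenter
    obtain ⟨v, -, hv⟩ := hcenter (Classical.arbitrary V)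
    obtain ⟨w, hwv, hw⟩ := hcenter v
    exact (hleaf hwv).elim hw hv
  exact ⟨c, isStar_of_adj_of_degree_eq_one (fun v hv ↦ h.adj_of_degree_eq_one hc hv) hc⟩

end SimpleGraph.IsTree

/-- an orientation of a tree on `n ≥ 2` vertices satisfies
`R⁰_{a+1}(D) ≤ (1/2)(n - 1 + (n-1)^(1+a))`, with equality iff `D` is one of the two
sink-source orientations of the star `K_{1,n-1}`. -/
theorem oriented_tree_randic_le {V : Type*} [Fintype V] (G : SimpleGraph V) (n : ℕ)
    (hn : Fintype.card V = n) (hn2 : 2 ≤ n) (htree : G.IsTree)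
    (D : G.Orientation) (a : ℝ) (ha : 1 ≤ a) :
    D.randic a ≤ (1 / 2) * ((n : ℝ) - 1 + ((n : ℝ) - 1) ^ (1 + a)) ∧
    (D.randic a = (1 / 2) * ((n : ℝ) - 1 + ((n : ℝ) - 1) ^ (1 + a)) ↔
      ∃ c : V, (∀ x y : V, G.Adj x y ↔ ((x = c ∧ y ≠ c) ∨ (y = c ∧ x ≠ c))) ∧
        ((∀ v : V, v ≠ c → D.arc c v) ∨ (∀ v : V, v ≠ c → D.arc v c))) := by
  classical
  subst hn
  have : Nontrivial V := Fintype.one_lt_card_iff_nontrivial.1 hn2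
  have hp : 1 < 1 + a := by linarith
  have hR := D.randic_eq_sum_rpow (a := a) (by linarith)
  have hD := D.sum_rpow_le_sum_degree_rpow hp.le
  have hG := htree.sum_degree_rpow_le hp.le
  refine ⟨by linarith, fun heq ↦ ?_, fun ⟨c, (hc : G.IsStar c), harc⟩ ↦ ?_⟩
  · have hss := (D.sum_rpow_eq_sum_degree_rpow_iff hp).1 (by linarith)
    obtain ⟨c, hc⟩ := htree.exists_isStar_of_sum_degree_rpow_eq hp (by linarith)
    exact ⟨c, hc, (hc.isSinkSource_iff D).1 hss⟩
  · have hss := (D.sum_rpow_eq_sum_degree_rpow_iff hp).2 ((hc.isSinkSource_iff D).2 harc)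
    rw [hR, hss, hc.sum_degree_rpow]
end
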